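/- Let Λ be a row-finite source-free k-graph, x ∈ Λ^∞, and H_x as above. Fix v ∈ Λ^0 and n ∈ ℕ^k. Then Σ_{λ ∈ vΛ^n} T_λ T_λ* = T_v on H_x: for every class [ξ^i_μ] with r(μ) = v there exists exactly one λ ∈ vΛ^n with T_λT_λ*[ξ^i_μ] = [ξ^i_μ], and T_λT_λ*[ξ^i_μ] = 0 for all other λ ∈ vΛ^n. -/

import Mathlib

open CategoryTheory
open scoped ENNReal BigOperators

noncomputable section
attribute [local instance] Classical.propDecidable

/-- A `k`-graph: a (small) category `Λ` together with a degree functor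
`d : Λ → ℕ^k` satisfying the unique factorization property.  A morphism
`f : v ⟶ w` is thought of as a path with range `v` and source `w`, and
composition `λμ` of composable paths is `λ ≫ μ`. -/
structure KGraph (k : ℕ) (Λ : Type) [SmallCategory Λ] where
  d : ∀ {u v : Λ}, (u ⟶ v) → (Fin k → ℕ)
  d_id : ∀ v : Λ, d (𝟙 v) = 0
  d_comp : ∀ {u v w : Λ} (f : u ⟶ v) (g : v ⟶ w), d (f ≫ g) = d f + d g
  factor : ∀ {u w : Λ} (f : u ⟶ w) (m n : Fin k → ℕ), d f = m + n →
    ∃! p : Σ v : Λ, (u ⟶ v) × (v ⟶ w),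
      d p.2.1 = m ∧ d p.2.2 = n ∧ p.2.1 ≫ p.2.2 = f

variable {Λ : Type} [SmallCategory Λ]

/-- The segment `x_i ⋯ x_{i+j−1}` of the fixed infinite path `x`. -/
def chainAux (v : ℕ → Λ) (x : ∀ i, v i ⟶ v (i + 1)) (i : ℕ) :
    ∀ j : ℕ, v i ⟶ v (i + j)
  | 0 => 𝟙 (v i)
  | j + 1 => chainAux v x i j ≫ x (i + j)

/-- The segment `x_i ⋯ x_{K−1}`, a morphism `v i ⟶ v K` for `i ≤ K`. -/
def chain (v : ℕ → Λ) (x : ∀ i, v i ⟶ v (i + 1)) (i K : ℕ) (h : i ≤ K) :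
    v i ⟶ v K :=
  chainAux v x i (K - i) ≫ eqToHom (congrArg v (Nat.add_sub_cancel' h))

/-- Indices of basis vectors `ξ^i_μ` with `μ ∈ F_i = Λ v_i`. -/
def Node (v : ℕ → Λ) : Type := Σ (i : ℕ) (u : Λ), (u ⟶ v i)

/-- The identification defining the inductive limit `H_x`. -/
def nodeRel (v : ℕ → Λ) (x : ∀ i, v i ⟶ v (i + 1)) (a b : Node v) : Prop :=
  ∃ (K : ℕ) (ha : a.1 ≤ K) (hb : b.1 ≤ K),
    (⟨a.2.1, a.2.2 ≫ chain v x a.1 K ha⟩ : Σ u : Λ, (u ⟶ v K)) =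
      ⟨b.2.1, b.2.2 ≫ chain v x b.1 K hb⟩

/-- The inductive limit Hilbert space `H_x = lim_→ ℓ²(F_i)`. -/
abbrev Hx (v : ℕ → Λ) (x : ∀ i, v i ⟶ v (i + 1)) : Type :=
  lp (fun _ : Quot (nodeRel v x) => ℂ) 2

/-- The basis vector `[ξ^i_μ]` of `H_x`. -/
def xi (v : ℕ → Λ) (x : ∀ i, v i ⟶ v (i + 1))
    (i : ℕ) (u : Λ) (μ : u ⟶ v i) : Hx v x :=
  lp.single 2 (Quot.mk (nodeRel v x) ⟨i, u, μ⟩) (1 : ℂ)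

/-!
A basis vector `[ξ^i_μ]` is fixed by `T_λ T_λ*` exactly when `λ` is an initial segment of `μ`
modulo the identifications of the inductive limit, i.e. `[ξ^i_μ] = [ξ^j_{λν}]` for some `ν`,
and is killed otherwise. Extending `μ` along `x` until its degree is at least `n` and
factorizing produces such a `λ ∈ vΛⁿ`; unique factorization, applied at a common level of
the inductive system, shows that it is unique and that `λ ↦ λν` is injective on classes.
Hence on each basis vector with `r(μ) = v` exactly one term of the sum acts as the identity
and the others vanish; row-finiteness makes the sum of operators finite, so it can be
evaluated termwise.
-/

namespace KGraph

variable {k : ℕ}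

lemma d_eqToHom (G : KGraph k Λ) {a b : Λ} (h : a = b) : G.d (eqToHom h) = 0 := by
  subst h
  exact G.d_id a

lemma factorization_eq_of_comp_eq (G : KGraph k Λ) {u a a' w : Λ} {f : u ⟶ a} {f' : u ⟶ a'}
    {g : a ⟶ w} {g' : a' ⟶ w} (hd : G.d f = G.d f') (h : f ≫ g = f' ≫ g') :
    (⟨a, f, g⟩ : Σ b : Λ, (u ⟶ b) × (b ⟶ w)) = ⟨a', f', g'⟩ := by
  have hd' : G.d g = G.d g' := add_left_cancel (by rw [← G.d_comp, h, G.d_comp, hd])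
  exact (G.factor (f ≫ g) (G.d f) (G.d g) (G.d_comp f g)).unique ⟨rfl, rfl, rfl⟩
    ⟨hd.symm, hd'.symm, h.symm⟩

lemma cancel_left (G : KGraph k Λ) {u a w : Λ} (f : u ⟶ a) {g g' : a ⟶ w}
    (h : f ≫ g = f ≫ g') : g = g' := by
  have := G.factorization_eq_of_comp_eq rfl h
  simp only [Sigma.mk.inj_iff, heq_eq_eq, Prod.mk.injEq, true_and] at this
  exact this

end KGraph

section Chain

variable (v : ℕ → Λ) (x : ∀ i, v i ⟶ v (i + 1))

lemma chainAux_congr (i : ℕ) {a b : ℕ} (h : a = b) :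
    chainAux v x i a = chainAux v x i b ≫ eqToHom (by rw [h]) := by
  subst h
  simp

lemma chain_self (i : ℕ) : chain v x i i le_rfl = 𝟙 (v i) := by
  rw [chain, chainAux_congr v x i (Nat.sub_self i)]
  simp [chainAux]

lemma chain_succ {i K : ℕ} (h : i ≤ K) :
    chain v x i (K + 1) (h.trans K.le_succ) = chain v x i K h ≫ x K := by
  have hK : i + (K - i) = K := Nat.add_sub_cancel' h
  rw [chain, chainAux_congr v x i (show K + 1 - i = K - i + 1 by omega), chain]
  simp only [chainAux, Category.assoc, eqToHom_trans]
  congr 1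
  have shift : ∀ m (hm : m = K) h₁ h₂, x m ≫ eqToHom h₁ = eqToHom h₂ ≫ x K := by
    rintro m rfl
    simp
  exact shift _ hK _ _

lemma chain_comp {i j K : ℕ} (hij : i ≤ j) (hjK : j ≤ K) :
    chain v x i j hij ≫ chain v x j K hjK = chain v x i K (hij.trans hjK) := by
  induction K with
  | zero =>
    obtain rfl : j = 0 := Nat.le_zero.mp hjK
    simp [chain_self]
  | succ K ih =>
    rcases hjK.lt_or_eq with hlt | rfl
    · have hjK' : j ≤ K := Nat.lt_succ_iff.mp hlt
      rw [chain_succ v x hjK', chain_succ v x (hij.trans hjK'), ← Category.assoc, ih hjK']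
    · rw [chain_self, Category.comp_id]

variable {k : ℕ} (G : KGraph k Λ) {v x}

lemma d_chainAux (hx : ∀ i, G.d (x i) = fun _ => 1) (i : ℕ) :
    ∀ j : ℕ, G.d (chainAux v x i j) = fun _ => j
  | 0 => G.d_id (v i)
  | j + 1 => by
    rw [chainAux, G.d_comp, d_chainAux hx i j, hx]
    rfl

lemma d_chain (hx : ∀ i, G.d (x i) = fun _ => 1) {i K : ℕ} (h : i ≤ K) :
    G.d (chain v x i K h) = fun _ => K - i := by
  rw [chain, G.d_comp, d_chainAux G hx, G.d_eqToHom, add_zero]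

end Chain

section NodeClasses

variable {v : ℕ → Λ} {x : ∀ i, v i ⟶ v (i + 1)}

lemma nodeRel_equivalence : Equivalence (nodeRel v x) where
  refl a := ⟨a.1, le_rfl, le_rfl, rfl⟩
  symm := fun ⟨K, ha, hb, h⟩ => ⟨K, hb, ha, h.symm⟩
  trans := by
    rintro a b c ⟨K₁, ha, hb, h₁⟩ ⟨K₂, hb', hc, h₂⟩
    refine ⟨max K₁ K₂, ha.trans (le_max_left _ _), hc.trans (le_max_right _ _), ?_⟩
    have push : ∀ {K K' : ℕ} (hK : K ≤ K') {s t : Σ u : Λ, (u ⟶ v K)}, s = t →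
        (⟨s.1, s.2 ≫ chain v x K K' hK⟩ : Σ u : Λ, (u ⟶ v K')) = ⟨t.1, t.2 ≫ chain v x K K' hK⟩ :=
      fun _ _ _ h => by rw [h]
    have e₁ := push (le_max_left K₁ K₂) h₁
    have e₂ := push (le_max_right K₁ K₂) h₂
    simp only [Category.assoc, chain_comp] at e₁ e₂
    exact e₁.trans e₂

lemma nodeRel_of_mk_eq {a b : Node v} (h : Quot.mk (nodeRel v x) a = Quot.mk (nodeRel v x) b) :
    nodeRel v x a b :=
  nodeRel_equivalence.eqvGen_iff.mp (Quot.eqvGen_exact h)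

lemma vertex_eq_of_mk_eq {i j : ℕ} {u u' : Λ} {μ : u ⟶ v i} {ν : u' ⟶ v j}
    (h : Quot.mk (nodeRel v x) ⟨i, u, μ⟩ = Quot.mk (nodeRel v x) ⟨j, u', ν⟩) : u = u' := by
  obtain ⟨_, _, _, hK⟩ := nodeRel_of_mk_eq h
  exact congrArg Sigma.fst hK

lemma mk_eq_mk_iff {i j : ℕ} {u : Λ} {μ : u ⟶ v i} {ν : u ⟶ v j} :
    Quot.mk (nodeRel v x) ⟨i, u, μ⟩ = Quot.mk (nodeRel v x) ⟨j, u, ν⟩ ↔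
      ∃ (K : ℕ) (hi : i ≤ K) (hj : j ≤ K), μ ≫ chain v x i K hi = ν ≫ chain v x j K hj := by
  constructor
  · intro h
    obtain ⟨K, hi, hj, hK⟩ := nodeRel_of_mk_eq h
    simp only [Sigma.mk.inj_iff, heq_eq_eq, true_and] at hK
    exact ⟨K, hi, hj, hK⟩
  · rintro ⟨K, hi, hj, hK⟩
    exact Quot.sound ⟨K, hi, hj, by rw [hK]⟩

lemma mk_comp_eq_mk_comp_iff {k : ℕ} (G : KGraph k Λ) {a b : Λ} (lam : a ⟶ b) {i j : ℕ}
    {μ : b ⟶ v i} {ν : b ⟶ v j} :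
    Quot.mk (nodeRel v x) ⟨i, a, lam ≫ μ⟩ = Quot.mk (nodeRel v x) ⟨j, a, lam ≫ ν⟩ ↔
      Quot.mk (nodeRel v x) ⟨i, b, μ⟩ = Quot.mk (nodeRel v x) ⟨j, b, ν⟩ := by
  simp only [mk_eq_mk_iff, Category.assoc]
  exact exists₃_congr fun K hi hj => ⟨G.cancel_left lam, congrArg (lam ≫ ·)⟩

end NodeClasses

def HasPrefix (v : ℕ → Λ) (x : ∀ i, v i ⟶ v (i + 1)) {a b : Λ} (lam : a ⟶ b)
    (q : Quot (nodeRel v x)) : Prop :=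
  ∃ (j : ℕ) (ν : b ⟶ v j), Quot.mk (nodeRel v x) ⟨j, a, lam ≫ ν⟩ = q

section Prefix

variable {v : ℕ → Λ} {x : ∀ i, v i ⟶ v (i + 1)} {k : ℕ} (G : KGraph k Λ)

lemma not_hasPrefix_of_ne {a b u : Λ} (lam : a ⟶ b) {i : ℕ} (μ : u ⟶ v i) (h : a ≠ u) :
    ¬ HasPrefix v x lam (Quot.mk (nodeRel v x) ⟨i, u, μ⟩) :=
  fun ⟨_, _, hq⟩ => h (vertex_eq_of_mk_eq hq)

lemma HasPrefix.sigma_eq_of_d_eq {a b c : Λ} {lam : a ⟶ b} {lam' : a ⟶ c}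
    {q : Quot (nodeRel v x)} (hd : G.d lam = G.d lam') (h : HasPrefix v x lam q)
    (h' : HasPrefix v x lam' q) :
    (⟨b, lam⟩ : Σ u : Λ, (a ⟶ u)) = ⟨c, lam'⟩ := by
  obtain ⟨j, ν, rfl⟩ := h
  obtain ⟨j', ν', hq⟩ := h'
  obtain ⟨K, hj', hj, hK⟩ := mk_eq_mk_iff.mp hq
  simp only [Category.assoc] at hK
  exact congrArg (fun p : Σ u : Λ, (a ⟶ u) × (u ⟶ v K) => (⟨p.1, p.2.1⟩ : Σ u : Λ, (a ⟶ u)))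
    (G.factorization_eq_of_comp_eq hd hK.symm)

lemma exists_hasPrefix (hx : ∀ i, G.d (x i) = fun _ => 1) {a : Λ} {i : ℕ} (μ : a ⟶ v i)
    (n : Fin k → ℕ) :
    ∃ (b : Λ) (lam : a ⟶ b), G.d lam = n ∧ HasPrefix v x lam (Quot.mk (nodeRel v x) ⟨i, a, μ⟩) := by
  have hij : i ≤ i + ∑ c, n c := Nat.le_add_right _ _
  set μx := μ ≫ chain v x i _ hij
  have hle : n ≤ G.d μx := fun c => by
    simp only [μx, G.d_comp, d_chain G hx, Pi.add_apply, Nat.add_sub_cancel_left]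
    exact le_add_left (Finset.single_le_sum (fun c _ => Nat.zero_le (n c)) (Finset.mem_univ c))
  obtain ⟨⟨b, lam, ν⟩, ⟨hlam, -, hfac⟩, -⟩ :=
    G.factor μx n (G.d μx - n) (add_tsub_cancel_of_le hle).symm
  refine ⟨b, lam, hlam, _, ν, mk_eq_mk_iff.mpr ⟨_, le_rfl, hij, ?_⟩⟩
  rw [chain_self, Category.comp_id, hfac]

lemma existsUnique_hasPrefix (hx : ∀ i, G.d (x i) = fun _ => 1) {a : Λ} {i : ℕ}
    (μ : a ⟶ v i) (n : Fin k → ℕ) :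
    ∃! p : Σ u : Λ, {f : a ⟶ u // G.d f = n},
      HasPrefix v x p.2.1 (Quot.mk (nodeRel v x) ⟨i, a, μ⟩) := by
  obtain ⟨b, lam, hlam, hpre⟩ := exists_hasPrefix G hx μ n
  refine ⟨⟨b, lam, hlam⟩, hpre, fun ⟨c, lam', hlam'⟩ hpre' => ?_⟩
  have := hpre'.sigma_eq_of_d_eq G (hlam'.trans hlam.symm) hpre
  cases this
  rfl

end Prefix

section Hilbert

variable {ι : Type*}

lemma lp.adjoint_apply_eq_inner (A : lp (fun _ : ι => ℂ) 2 →L[ℂ] lp (fun _ : ι => ℂ) 2)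
    (f : lp (fun _ : ι => ℂ) 2) (q : ι) :
    (ContinuousLinearMap.adjoint A f) q = inner ℂ (A (lp.single 2 q 1)) f := by
  classical
  rw [← ContinuousLinearMap.adjoint_inner_right, lp.inner_single_left]
  simp

end Hilbert

section Operators

variable {v : ℕ → Λ} {x : ∀ i, v i ⟶ v (i + 1)}
  (T : ∀ {a b : Λ}, (a ⟶ b) → (Hx v x →L[ℂ] Hx v x))
  (hT : ∀ {a b : Λ} (lam : a ⟶ b) (i : ℕ) (u : Λ) (μ : u ⟶ v i),
    T lam (xi v x i u μ) = if h : b = u then xi v x i a (lam ≫ eqToHom h ≫ μ) else 0)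

lemma xi_ne_zero (i : ℕ) (u : Λ) (μ : u ⟶ v i) : xi v x i u μ ≠ 0 :=
  norm_ne_zero_iff.mp (by rw [xi, lp.norm_single (by norm_num)]; norm_num)

include hT

lemma T_xi_of_eq {a b : Λ} (lam : a ⟶ b) {j : ℕ} (ν : b ⟶ v j) :
    T lam (xi v x j b ν) = xi v x j a (lam ≫ ν) := by
  rw [hT, dif_pos rfl, eqToHom_refl, Category.id_comp]

lemma adjoint_T_apply_of_eq {a b : Λ} (lam : a ⟶ b) (f : Hx v x) {j : ℕ} (ν : b ⟶ v j) :
    (ContinuousLinearMap.adjoint (T lam) f) (Quot.mk _ ⟨j, b, ν⟩) =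
      f (Quot.mk _ ⟨j, a, lam ≫ ν⟩) := by
  rw [lp.adjoint_apply_eq_inner, ← xi, T_xi_of_eq T hT, xi, lp.inner_single_left]
  simp

lemma adjoint_T_apply_of_ne {a b u : Λ} (lam : a ⟶ b) (f : Hx v x) {j : ℕ} (ν : u ⟶ v j)
    (h : b ≠ u) : (ContinuousLinearMap.adjoint (T lam) f) (Quot.mk _ ⟨j, u, ν⟩) = 0 := by
  rw [lp.adjoint_apply_eq_inner, ← xi, hT, dif_neg h, inner_zero_left]

lemma adjoint_T_single_of_not_hasPrefix {a b : Λ} (lam : a ⟶ b) {q : Quot (nodeRel v x)}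
    (hq : ¬ HasPrefix v x lam q) : ContinuousLinearMap.adjoint (T lam) (lp.single 2 q 1) = 0 := by
  refine lp.ext (funext fun q' => ?_)
  obtain ⟨⟨j, u, ν⟩, rfl⟩ := Quot.exists_rep q'
  by_cases hb : b = u
  · subst hb
    rw [adjoint_T_apply_of_eq T hT, lp.single_apply_ne _ _ _ fun h => hq ⟨j, ν, h⟩]
    rfl
  · exact adjoint_T_apply_of_ne T hT lam _ ν hb

lemma adjoint_T_xi_comp {k : ℕ} (G : KGraph k Λ) {a b : Λ} (lam : a ⟶ b) {j : ℕ}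
    (ν : b ⟶ v j) : ContinuousLinearMap.adjoint (T lam) (xi v x j a (lam ≫ ν)) = xi v x j b ν := by
  refine lp.ext (funext fun q => ?_)
  obtain ⟨⟨j', u, ν'⟩, rfl⟩ := Quot.exists_rep q
  by_cases hb : b = u
  · subst hb
    rw [adjoint_T_apply_of_eq T hT]
    simp only [xi, lp.single_apply, Pi.single_apply, mk_comp_eq_mk_comp_iff G]
  · rw [adjoint_T_apply_of_ne T hT lam _ ν' hb, xi,
      lp.single_apply_ne _ _ _ fun h => hb (vertex_eq_of_mk_eq h).symm]

lemma T_T_adjoint_single {k : ℕ} (G : KGraph k Λ) {a b : Λ} (lam : a ⟶ b)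
    (q : Quot (nodeRel v x)) :
    T lam (ContinuousLinearMap.adjoint (T lam) (lp.single 2 q 1)) =
      if HasPrefix v x lam q then lp.single 2 q 1 else 0 := by
  split_ifs with hq
  · obtain ⟨j, ν, rfl⟩ := hq
    rw [← xi, adjoint_T_xi_comp T hT G, T_xi_of_eq T hT]
  · rw [adjoint_T_single_of_not_hasPrefix T hT lam hq, map_zero]

lemma finsum_T_T_adjoint_xi {k : ℕ} (G : KGraph k Λ) (hx : ∀ i, G.d (x i) = fun _ => 1)
    (a : Λ) (n : Fin k → ℕ) {i : ℕ} {u : Λ} (μ : u ⟶ v i) :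
    ∑ᶠ p : Σ w : Λ, {f : a ⟶ w // G.d f = n},
        T p.2.1 (ContinuousLinearMap.adjoint (T p.2.1) (xi v x i u μ)) =
      T (𝟙 a) (xi v x i u μ) := by
  simp only [xi, T_T_adjoint_single T hT G]
  by_cases hu : a = u
  · subst hu
    obtain ⟨p₀, hp₀, huniq⟩ := existsUnique_hasPrefix G hx μ n
    rw [finsum_eq_single _ p₀ fun p hp => if_neg (mt (huniq p) hp), if_pos hp₀, ← xi,
      T_xi_of_eq T hT, Category.id_comp]
  · rw [finsum_eq_zero_of_forall_eq_zero fun p => if_neg (not_hasPrefix_of_ne _ μ hu), ← xi,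
      hT, dif_neg hu]

end Operators

/-- The Cuntz–Krieger relation `∑_{λ ∈ vΛⁿ} T_λ T_λ* = T_v` on `H_x`, for a
row-finite `k`-graph: for every class `[ξ^i_μ]` with `r(μ) = v` there is
exactly one `λ ∈ vΛⁿ` with `T_λ T_λ* [ξ^i_μ] = [ξ^i_μ]`, and `T_λ T_λ*`
kills `[ξ^i_μ]` for all other `λ ∈ vΛⁿ`. -/
theorem sum_T_lambda_T_lambda_star
    {k : ℕ} (G : KGraph k Λ)
    (rowFinite : ∀ (a : Λ) (n : Fin k → ℕ),
      Finite (Σ u : Λ, {f : a ⟶ u // G.d f = n}))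
    (v : ℕ → Λ) (x : ∀ i, v i ⟶ v (i + 1))
    (hx : ∀ i, G.d (x i) = fun _ => 1)
    (T : ∀ {a b : Λ}, (a ⟶ b) → (Hx v x →L[ℂ] Hx v x))
    (hT : ∀ {a b : Λ} (lam : a ⟶ b) (i : ℕ) (u : Λ) (μ : u ⟶ v i),
      T lam (xi v x i u μ) =
        if h : b = u then xi v x i a (lam ≫ eqToHom h ≫ μ) else 0) :
    ∀ (v₀ : Λ) (n : Fin k → ℕ),
      (∑ᶠ p : Σ u : Λ, {f : v₀ ⟶ u // G.d f = n},
          (T p.2.1).comp (ContinuousLinearMap.adjoint (T p.2.1))) = T (𝟙 v₀) ∧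
      ∀ (i : ℕ) (μ : v₀ ⟶ v i),
        (∃! p : Σ u : Λ, {f : v₀ ⟶ u // G.d f = n},
          (T p.2.1) (ContinuousLinearMap.adjoint (T p.2.1) (xi v x i v₀ μ)) =
            xi v x i v₀ μ) ∧
        ∀ p : Σ u : Λ, {f : v₀ ⟶ u // G.d f = n},
          (T p.2.1) (ContinuousLinearMap.adjoint (T p.2.1) (xi v x i v₀ μ)) ≠
              xi v x i v₀ μ →
            (T p.2.1) (ContinuousLinearMap.adjoint (T p.2.1) (xi v x i v₀ μ)) = 0 := by
  intro v₀ n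
  have hTT (p : Σ u : Λ, {f : v₀ ⟶ u // G.d f = n}) {i : ℕ} (μ : v₀ ⟶ v i) :
      T p.2.1 (ContinuousLinearMap.adjoint (T p.2.1) (xi v x i v₀ μ)) =
        if HasPrefix v x p.2.1 (Quot.mk _ ⟨i, v₀, μ⟩) then xi v x i v₀ μ else 0 :=
    T_T_adjoint_single T hT G _ _
  refine ⟨?_, fun i μ => ⟨?_, fun p hp => ?_⟩⟩
  · have := rowFinite v₀ n
    refine lp.ext_continuousLinearMap ENNReal.ofNat_ne_top fun q =>
      ContinuousLinearMap.ext_ring ?_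
    obtain ⟨⟨i, u, μ⟩, rfl⟩ := Quot.exists_rep q
    exact (map_finsum (ContinuousLinearMap.apply ℂ _ (xi v x i u μ)) (Set.toFinite _)).trans
      (finsum_T_T_adjoint_xi T hT G hx v₀ n μ)
  · refine (existsUnique_congr fun p => ?_).mp (existsUnique_hasPrefix G hx μ n)
    rw [hTT]
    split_ifs with h <;> simp [h, (xi_ne_zero i v₀ μ).symm]
  · rw [hTT] at hp ⊢
    exact if_neg fun h => hp (if_pos h)
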